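/- With the benchmark HetGNN recursion defined in the context, let π₁ be a permutation of Fin K (users) and π₂ a permutation of Fin L (RISs), and let the permuted instance be run with the same maps from permuted initial features v̂_{u,π₁(k)}^{(0)} = v_{u,k}^{(0)} and v̂_{r,π₂(i)}^{(0)} = v_{r,i}^{(0)}. Then: (i) for every layer t and all k, i, v̂_{u,π₁(k)}^{(t)} = v_{u,k}^{(t)} and v̂_{r,π₂(i)}^{(t)} = v_{r,i}^{(t)}; and (ii) the beamforming readout of the permuted instance, Ŵ := φ_b( (1/2)( φ_ub(v̂_{u,π₁(1)}^{(T)}, …, v̂_{u,π₁(K)}^{(T)}) + φ_rb(v̂_{r,π₂(1)}^{(T)}, …, v̂_{r,π₂(L)}^{(T)}) ) ), equals the readout of the original instance, W := φ_b( (1/2)( φ_ub(v_{u,1}^{(T)}, …, v_{u,K}^{(T)}) + φ_rb(v_{r,1}^{(T)}, …, v_{r,L}^{(T)}) ) ). Hence the beamforming matrix produced by the benchmark is invariant under user permutations, so it satisfies the permutation-equivariance relation Π₁ W = Ŵ only when Π₁ W = W; in particular, whenever permuting the users changes W, the benchmark readout fails to be permutation equivariant. -/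
import Mathlib


/-- One layer of the benchmark HetGNN message passing of Liu et al. (Appendix C),
with all pooling operators taken as arithmetic means. -/
noncomputable def hetStep {V : Type*} [AddCommGroup V] [Module ℝ V] {K L : ℕ}
    (φ1 : V → V → V) (φ2 : V → V) (φ3 φ4 φ5 : V → V → V) (φ6 φ7 : V → V)
    (vu : Fin K → V) (vr : Fin L → V) : (Fin K → V) × (Fin L → V) :=
  (fun k =>
      ((2 : ℝ)⁻¹) • (φ1 (((L : ℝ)⁻¹) • ∑ i, φ7 (vr i)) (vu k) +
          ((2 : ℝ)⁻¹) • (φ2 (((K : ℝ)⁻¹) • ∑ j, φ6 (vu j)) + φ3 (φ6 (vu k)) (vu k))) +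
        vu k,
   fun i =>
      ((2 : ℝ)⁻¹) • (φ4 (φ7 (vr i)) (vr i) +
          φ5 (((K : ℝ)⁻¹) • ∑ j, φ6 (vu j)) (vr i)) +
        vr i)

/-- The benchmark HetGNN features after `t` layers. -/
noncomputable def hetIter {V : Type*} [AddCommGroup V] [Module ℝ V] {K L : ℕ}
    (φ1 : V → V → V) (φ2 : V → V) (φ3 φ4 φ5 : V → V → V) (φ6 φ7 : V → V)
    (vu0 : Fin K → V) (vr0 : Fin L → V) : ℕ → (Fin K → V) × (Fin L → V)
  | 0 => (vu0, vr0)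
  | t + 1 =>
      hetStep φ1 φ2 φ3 φ4 φ5 φ6 φ7
        (hetIter φ1 φ2 φ3 φ4 φ5 φ6 φ7 vu0 vr0 t).1
        (hetIter φ1 φ2 φ3 φ4 φ5 φ6 φ7 vu0 vr0 t).2

/-- Appendix C: the benchmark HetGNN vertex features are permutation equivariant,
but the beamforming readout is permutation *invariant*: the readout `Wp` of the
permuted instance equals the readout `W` of the original instance. Hence the
equivariance relation `Π₁ W = Wp` holds only when `Π₁ W = W`; whenever permuting
the users changes `W`, the benchmark readout fails to be permutation equivariant. -/
theorem hetgnn_readout_not_equivariant {V Z : Type*} [AddCommGroup V] [Module ℝ V]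
    {K L : ℕ} (hK : 1 ≤ K) (hL : 1 ≤ L)
    (φ1 : V → V → V) (φ2 : V → V) (φ3 φ4 φ5 : V → V → V) (φ6 φ7 : V → V)
    (φub : (Fin K → V) → V) (φrb : (Fin L → V) → V) (φb : V → (Fin K → Z))
    (T : ℕ) (π₁ : Equiv.Perm (Fin K)) (π₂ : Equiv.Perm (Fin L))
    (vu0 vu0' : Fin K → V) (vr0 vr0' : Fin L → V)
    (hu0 : ∀ k, vu0' (π₁ k) = vu0 k) (hr0 : ∀ i, vr0' (π₂ i) = vr0 i)
    (W Wp : Fin K → Z)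
    (hW : W = φb (((2 : ℝ)⁻¹) •
        (φub (fun k => (hetIter φ1 φ2 φ3 φ4 φ5 φ6 φ7 vu0 vr0 T).1 k) +
          φrb (fun i => (hetIter φ1 φ2 φ3 φ4 φ5 φ6 φ7 vu0 vr0 T).2 i))))
    (hWp : Wp = φb (((2 : ℝ)⁻¹) •
        (φub (fun k => (hetIter φ1 φ2 φ3 φ4 φ5 φ6 φ7 vu0' vr0' T).1 (π₁ k)) +
          φrb (fun i => (hetIter φ1 φ2 φ3 φ4 φ5 φ6 φ7 vu0' vr0' T).2 (π₂ i))))) :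
    (∀ t, (∀ k, (hetIter φ1 φ2 φ3 φ4 φ5 φ6 φ7 vu0' vr0' t).1 (π₁ k) =
            (hetIter φ1 φ2 φ3 φ4 φ5 φ6 φ7 vu0 vr0 t).1 k) ∧
        (∀ i, (hetIter φ1 φ2 φ3 φ4 φ5 φ6 φ7 vu0' vr0' t).2 (π₂ i) =
            (hetIter φ1 φ2 φ3 φ4 φ5 φ6 φ7 vu0 vr0 t).2 i)) ∧
    Wp = W ∧
    ((fun k => W (π₁.symm k)) = Wp ↔ (fun k => W (π₁.symm k)) = W) ∧
    ((fun k => W (π₁.symm k)) ≠ W → (fun k => W (π₁.symm k)) ≠ Wp) := by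
  have key : ∀ t, (∀ k, (hetIter φ1 φ2 φ3 φ4 φ5 φ6 φ7 vu0' vr0' t).1 (π₁ k) =
            (hetIter φ1 φ2 φ3 φ4 φ5 φ6 φ7 vu0 vr0 t).1 k) ∧
        (∀ i, (hetIter φ1 φ2 φ3 φ4 φ5 φ6 φ7 vu0' vr0' t).2 (π₂ i) =
            (hetIter φ1 φ2 φ3 φ4 φ5 φ6 φ7 vu0 vr0 t).2 i) := by
    intro t
    induction t with
    | zero => exact ⟨hu0, hr0⟩
    | succ t ih =>
      obtain ⟨hu, hr⟩ := ih
      have hsumu : ∑ j, φ6 ((hetIter φ1 φ2 φ3 φ4 φ5 φ6 φ7 vu0' vr0' t).1 j)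
          = ∑ j, φ6 ((hetIter φ1 φ2 φ3 φ4 φ5 φ6 φ7 vu0 vr0 t).1 j) := by
        rw [← Equiv.sum_comp π₁ (fun j => φ6 ((hetIter φ1 φ2 φ3 φ4 φ5 φ6 φ7 vu0' vr0' t).1 j))]
        exact Finset.sum_congr rfl fun j _ => by rw [hu]
      have hsumr : ∑ i, φ7 ((hetIter φ1 φ2 φ3 φ4 φ5 φ6 φ7 vu0' vr0' t).2 i)
          = ∑ i, φ7 ((hetIter φ1 φ2 φ3 φ4 φ5 φ6 φ7 vu0 vr0 t).2 i) := by
        rw [← Equiv.sum_comp π₂ (fun i => φ7 ((hetIter φ1 φ2 φ3 φ4 φ5 φ6 φ7 vu0' vr0' t).2 i))]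
        exact Finset.sum_congr rfl fun i _ => by rw [hr]
      constructor
      · intro k; simp only [hetIter, hetStep, hsumu, hsumr, hu, hr]
      · intro i; simp only [hetIter, hetStep, hsumu, hsumr, hu, hr]
  have hWpW : Wp = W := by
    have h1 : (fun k => (hetIter φ1 φ2 φ3 φ4 φ5 φ6 φ7 vu0' vr0' T).1 (π₁ k))
        = (fun k => (hetIter φ1 φ2 φ3 φ4 φ5 φ6 φ7 vu0 vr0 T).1 k) :=
      funext fun k => (key T).1 k
    have h2 : (fun i => (hetIter φ1 φ2 φ3 φ4 φ5 φ6 φ7 vu0' vr0' T).2 (π₂ i))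
        = (fun i => (hetIter φ1 φ2 φ3 φ4 φ5 φ6 φ7 vu0 vr0 T).2 i) :=
      funext fun i => (key T).2 i
    rw [hW, hWp, h1, h2]
  refine ⟨key, hWpW, by rw [hWpW], fun h h' => h (h'.trans hWpW)⟩
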